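/- arXiv:2007.00593 — 2 statements merged into one kernel-verified Lean document; each statement's English description precedes it below -/
import Mathlib

section
/- Let J, Z ∈ E and φ ∈ ℝ with |φ| < 1 and ‖Z‖ < 1, and let μ, u ∈ ℝ. Set J̄ := J − (1/2)·h(J) − φ‖Z‖·h(Z) and μ̄ := μ + u/2 − φ·⟨h(Z), Z⟩. Then 2(μ̄ − ‖J̄‖_h) ≥ 2(μ − ‖J‖) + u − 6·‖h‖^{1/2}·|φ|^{1/2}·‖Z‖·(‖J‖^{1/2} + 1). (Pointwise form of the lemma: if Φ^{(φ,Z)}_{(γ,τ)}(γ̄,τ̄) = Φ^{(φ,Z)}_{(γ,τ)}(γ,τ) + (u,0) with |γ̄−γ|_γ < 1, |φ| < 1, |Z|_γ < 1, then σ(γ̄,τ̄) ≥ σ(γ,τ) + u − 6|γ̄−γ|_γ^{1/2}|φ|^{1/2}|Z|_γ(|J|_γ^{1/2}+1).) -/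
/-!
`‖·‖_h` is a genuine norm: Cauchy–Schwarz holds for the perturbed inner product. Write
`J̄ = (1 - h/2) J - b` with `b = φ‖Z‖ • h Z`. The map `1 - h/2` is a contraction from `‖·‖`
into `‖·‖_h`, while `‖b‖_h` and `φ⟪h Z, Z⟫` are of order `ε = ‖h‖ |φ| ‖Z‖²`. Hence the
dominant energy scalar drops by at most `6ε`, and `ε ≤ √ε ≤ 1` because all three factors
are at most `1`.
-/

open scoped RealInnerProductSpace

/-- The norm associated to the perturbed inner product
`⟪v, w⟫_h := ⟪v, w⟫ + ⟪h v, w⟫` coming from a perturbation `h` of the metric. -/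
noncomputable def perturbedNorm {E : Type*} [NormedAddCommGroup E] [InnerProductSpace ℝ E]
    (h : E →L[ℝ] E) (v : E) : ℝ :=
  Real.sqrt (⟪v, v⟫ + ⟪h v, v⟫)

section PerturbedNorm

variable {E : Type*} [NormedAddCommGroup E] [InnerProductSpace ℝ E] (h : E →L[ℝ] E)

theorem abs_inner_apply_self_le (v : E) : |⟪h v, v⟫| ≤ ‖h‖ * ‖v‖ ^ 2 :=
  calc |⟪h v, v⟫| ≤ ‖h v‖ * ‖v‖ := abs_real_inner_le_norm _ _
    _ ≤ ‖h‖ * ‖v‖ * ‖v‖ := by gcongr; exact h.le_opNorm v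
    _ = ‖h‖ * ‖v‖ ^ 2 := by ring

theorem inner_add_inner_apply_self_nonneg (hnorm : ‖h‖ ≤ 1) (v : E) :
    0 ≤ ⟪v, v⟫ + ⟪h v, v⟫ := by
  have := (abs_le.mp (abs_inner_apply_self_le h v)).1
  rw [real_inner_self_eq_norm_sq]
  nlinarith [sq_nonneg ‖v‖]

theorem perturbedNorm_sq (hnorm : ‖h‖ ≤ 1) (v : E) :
    perturbedNorm h v ^ 2 = ⟪v, v⟫ + ⟪h v, v⟫ :=
  Real.sq_sqrt (inner_add_inner_apply_self_nonneg h hnorm v)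

theorem perturbedNorm_neg (v : E) : perturbedNorm h (-v) = perturbedNorm h v := by
  simp [perturbedNorm]

theorem perturbedNorm_le_sqrt_one_add_opNorm_mul (v : E) :
    perturbedNorm h v ≤ Real.sqrt (1 + ‖h‖) * ‖v‖ := by
  rw [perturbedNorm, ← Real.sqrt_sq (norm_nonneg v), ← Real.sqrt_mul (by positivity)]
  gcongr
  rw [real_inner_self_eq_norm_sq]
  linarith [(abs_le.mp (abs_inner_apply_self_le h v)).2]

variable {h}

/-- Cauchy–Schwarz for `⟪·, ·⟫_h`, from the nonpositive discriminant of the nonnegative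
quadratic `t ↦ ‖v + t • w‖_h ^ 2`. -/
theorem inner_add_inner_apply_le_perturbedNorm_mul (hsa : ∀ v w : E, ⟪h v, w⟫ = ⟪v, h w⟫)
    (hnorm : ‖h‖ ≤ 1) (v w : E) :
    ⟪v, w⟫ + ⟪h v, w⟫ ≤ perturbedNorm h v * perturbedNorm h w := by
  have hquad : ∀ t : ℝ, 0 ≤ (⟪w, w⟫ + ⟪h w, w⟫) * (t * t) + 2 * (⟪v, w⟫ + ⟪h v, w⟫) * t
      + (⟪v, v⟫ + ⟪h v, v⟫) := fun t => by
    convert inner_add_inner_apply_self_nonneg h hnorm (v + t • w) using 1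
    simp only [map_add, map_smul, inner_add_left, inner_add_right, real_inner_smul_left,
      real_inner_smul_right, real_inner_comm v w, hsa w v, real_inner_comm (h v) w]
    ring
  have hdisc := discrim_le_zero hquad
  rw [discrim] at hdisc
  rw [perturbedNorm, perturbedNorm, ← Real.sqrt_mul (inner_add_inner_apply_self_nonneg h hnorm v)]
  exact (le_abs_self _).trans (Real.abs_le_sqrt (by nlinarith))

theorem perturbedNorm_add_le (hsa : ∀ v w : E, ⟪h v, w⟫ = ⟪v, h w⟫) (hnorm : ‖h‖ ≤ 1)
    (v w : E) : perturbedNorm h (v + w) ≤ perturbedNorm h v + perturbedNorm h w := by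
  have hvw := inner_add_inner_apply_le_perturbedNorm_mul hsa hnorm v w
  have hwv : ⟪w, v⟫ + ⟪h w, v⟫ = ⟪v, w⟫ + ⟪h v, w⟫ := by
    rw [real_inner_comm w v, hsa w v, real_inner_comm (h v) w]
  rw [perturbedNorm, Real.sqrt_le_iff]
  refine ⟨add_nonneg (Real.sqrt_nonneg _) (Real.sqrt_nonneg _), ?_⟩
  rw [add_sq, perturbedNorm_sq h hnorm, perturbedNorm_sq h hnorm]
  simp only [map_add, inner_add_left, inner_add_right]
  linarith

theorem perturbedNorm_sub_le (hsa : ∀ v w : E, ⟪h v, w⟫ = ⟪v, h w⟫) (hnorm : ‖h‖ ≤ 1)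
    (v w : E) : perturbedNorm h (v - w) ≤ perturbedNorm h v + perturbedNorm h w := by
  simpa only [sub_eq_add_neg, perturbedNorm_neg] using perturbedNorm_add_le hsa hnorm v (-w)

/-- `(1 + h) (1 - h/2)² = 1 - h² (3 - h) / 4 ≤ 1`. -/
theorem perturbedNorm_sub_half_apply_le (hsa : ∀ v w : E, ⟪h v, w⟫ = ⟪v, h w⟫)
    (hnorm : ‖h‖ ≤ 1) (J : E) : perturbedNorm h (J - (1 / 2 : ℝ) • h J) ≤ ‖J‖ := by
  have hexpand : ⟪J - (1 / 2 : ℝ) • h J, J - (1 / 2 : ℝ) • h J⟫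
      + ⟪h (J - (1 / 2 : ℝ) • h J), J - (1 / 2 : ℝ) • h J⟫
      = ‖J‖ ^ 2 - (3 / 4) * ‖h J‖ ^ 2 + (1 / 4) * ⟪h (h J), h J⟫ := by
    simp only [map_sub, map_smul, inner_sub_left, inner_sub_right, real_inner_smul_left,
      real_inner_smul_right]
    rw [real_inner_comm J (h J), hsa (h J) J, real_inner_self_eq_norm_sq,
      real_inner_self_eq_norm_sq]
    ring
  have hcube : ⟪h (h J), h J⟫ ≤ ‖h J‖ ^ 2 :=
    (le_abs_self _).trans ((abs_inner_apply_self_le h (h J)).trans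
      (mul_le_of_le_one_left (by positivity) hnorm))
  rw [perturbedNorm, Real.sqrt_le_iff, hexpand]
  exact ⟨norm_nonneg J, by nlinarith [sq_nonneg ‖h J‖]⟩

end PerturbedNorm

theorem mul_mul_sq_le_sqrt_mul_sqrt_mul {x y z : ℝ} (hx0 : 0 ≤ x) (hy0 : 0 ≤ y) (hz0 : 0 ≤ z)
    (hx : x ≤ 1) (hy : y ≤ 1) (hz : z ≤ 1) : x * y * z ^ 2 ≤ √x * √y * z := by
  have hle_one : √x * √y * z ≤ 1 :=
    mul_le_one₀ (mul_le_one₀ (Real.sqrt_le_one.mpr hx) (Real.sqrt_nonneg _)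
      (Real.sqrt_le_one.mpr hy)) hz0 hz
  have hsq : (√x * √y * z) ^ 2 = x * y * z ^ 2 := by
    rw [mul_pow, mul_pow, Real.sq_sqrt hx0, Real.sq_sqrt hy0]
  rw [← hsq]
  nlinarith [show 0 ≤ √x * √y * z by positivity]

theorem dominantEnergyScalar_ge_of_phiZ_modified_general
    {E : Type*} [NormedAddCommGroup E] [InnerProductSpace ℝ E]
    (h : E →L[ℝ] E) (hsa : ∀ v w : E, ⟪h v, w⟫ = ⟪v, h w⟫) (hnorm : ‖h‖ < 1)
    (J Z : E) (φ : ℝ) (hφ : |φ| < 1) (hZ : ‖Z‖ < 1) (μ u : ℝ) :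
    2 * ((μ + u / 2 - φ * ⟪h Z, Z⟫)
        - perturbedNorm h (J - (1 / 2 : ℝ) • h J - (φ * ‖Z‖) • h Z))
      ≥ 2 * (μ - ‖J‖) + u
        - 6 * Real.sqrt ‖h‖ * Real.sqrt |φ| * ‖Z‖ * (Real.sqrt ‖J‖ + 1) := by
  set ε := ‖h‖ * |φ| * ‖Z‖ ^ 2
  have hε : ε ≤ √‖h‖ * √|φ| * ‖Z‖ := mul_mul_sq_le_sqrt_mul_sqrt_mul (norm_nonneg h)
    (abs_nonneg φ) (norm_nonneg Z) hnorm.le hφ.le hZ.le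
  have hshift : φ * ⟪h Z, Z⟫ ≤ ε := calc
    φ * ⟪h Z, Z⟫ ≤ |φ| * |⟪h Z, Z⟫| := abs_mul φ _ ▸ le_abs_self _
    _ ≤ |φ| * (‖h‖ * ‖Z‖ ^ 2) := by gcongr; exact abs_inner_apply_self_le h Z
    _ = ε := by ring
  have hcorr : perturbedNorm h ((φ * ‖Z‖) • h Z) ≤ 2 * ε := calc
    _ ≤ √(1 + ‖h‖) * ‖(φ * ‖Z‖) • h Z‖ := perturbedNorm_le_sqrt_one_add_opNorm_mul h _
    _ ≤ 2 * (|φ| * ‖Z‖ * (‖h‖ * ‖Z‖)) := by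
      rw [norm_smul, Real.norm_eq_abs, abs_mul, abs_norm]
      gcongr
      · exact Real.sqrt_le_iff.mpr ⟨zero_le_two, by linarith⟩
      · exact h.le_opNorm Z
    _ = 2 * ε := by ring
  have hJbar : perturbedNorm h (J - (1 / 2 : ℝ) • h J - (φ * ‖Z‖) • h Z) ≤ ‖J‖ + 2 * ε :=
    (perturbedNorm_sub_le hsa hnorm.le _ _).trans
      (add_le_add (perturbedNorm_sub_half_apply_le hsa hnorm.le J) hcorr)
  have hcross : 0 ≤ √‖h‖ * √|φ| * ‖Z‖ * √‖J‖ := by positivity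
  linarith

/-- with `J̄ := J − (1/2)·h(J) − φ‖Z‖·h(Z)` and
`μ̄ := μ + u/2 − φ·⟨h(Z), Z⟩`, if `|φ| < 1` and `‖Z‖ < 1` then
`2(μ̄ − ‖J̄‖_h) ≥ 2(μ − ‖J‖) + u − 6·‖h‖^{1/2}·|φ|^{1/2}·‖Z‖·(‖J‖^{1/2} + 1)`. -/
theorem dominantEnergyScalar_ge_of_phiZ_modified
    {E : Type*} [NormedAddCommGroup E] [InnerProductSpace ℝ E] [FiniteDimensional ℝ E]
    (h : E →L[ℝ] E) (hsa : ∀ v w : E, ⟪h v, w⟫ = ⟪v, h w⟫) (hnorm : ‖h‖ < 1)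
    (J Z : E) (φ : ℝ) (hφ : |φ| < 1) (hZ : ‖Z‖ < 1) (μ u : ℝ) :
    2 * ((μ + u / 2 - φ * ⟪h Z, Z⟫)
        - perturbedNorm h (J - (1 / 2 : ℝ) • h J - (φ * ‖Z‖) • h Z))
      ≥ 2 * (μ - ‖J‖) + u
        - 6 * Real.sqrt ‖h‖ * Real.sqrt |φ| * ‖Z‖ * (Real.sqrt ‖J‖ + 1) :=
  dominantEnergyScalar_ge_of_phiZ_modified_general h hsa hnorm J Z φ hφ hZ μ u
end

section
/- For the initial data set (U, g, π) induced by the pp-wave ansatz, the energy and current densities are μ = −(1/2)·S⁻¹·Δ'S on U, and J^a = 0 for a = 1, …, n−1 while J^n = (1/2)·S^{−3/2}·Δ'S on U. Consequently, if Δ'S ≤ 0 on U, then μ = |J|_g ≥ 0 everywhere on U (the dominant energy condition holds with equality). -/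
open scoped BigOperators

noncomputable section

/-- Points of `ℝⁿ` with `n = m + 1`. -/
abbrev PPPt (m : ℕ) := EuclideanSpace ℝ (Fin (m + 1))

/-- The `i`-th coordinate vector. -/
def ppe (m : ℕ) (i : Fin (m + 1)) : PPPt m := EuclideanSpace.single i 1

/-- Partial derivative `∂f/∂xⁱ` at `x`. -/
def ppd (m : ℕ) (i : Fin (m + 1)) (f : PPPt m → ℝ) (x : PPPt m) : ℝ :=
  fderiv ℝ f x (ppe m i)

/-- The metric `g`: `g_{nn} = S`, `g_{ab} = δ_{ab}`, `g_{na} = 0`. -/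
def ppg (m : ℕ) (S : PPPt m → ℝ) (x : PPPt m) (i j : Fin (m + 1)) : ℝ :=
  if i = Fin.last m ∧ j = Fin.last m then S x else if i = j then 1 else 0

/-- The inverse metric: `g^{nn} = S⁻¹`, `g^{ab} = δ^{ab}`, `g^{na} = 0`. -/
def ppginv (m : ℕ) (S : PPPt m → ℝ) (x : PPPt m) (i j : Fin (m + 1)) : ℝ :=
  if i = Fin.last m ∧ j = Fin.last m then (S x)⁻¹ else if i = j then 1 else 0

/-- Christoffel symbols `Γ^k_{ij} = (1/2)g^{kl}(∂_i g_{jl} + ∂_j g_{il} − ∂_l g_{ij})`. -/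
def ppGamma (m : ℕ) (S : PPPt m → ℝ) (x : PPPt m) (k i j : Fin (m + 1)) : ℝ :=
  (1 / 2) * ∑ l, ppginv m S x k l *
    (ppd m i (fun y => ppg m S y j l) x + ppd m j (fun y => ppg m S y i l) x
      - ppd m l (fun y => ppg m S y i j) x)

/-- Scalar curvature
`R_g = g^{jk}(∂_l Γ^l_{jk} − ∂_j Γ^l_{lk} + Γ^l_{lm}Γ^m_{jk} − Γ^l_{jm}Γ^m_{lk})`. -/
def ppScal (m : ℕ) (S : PPPt m → ℝ) (x : PPPt m) : ℝ :=
  ∑ j, ∑ k, ppginv m S x j k *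
    ((∑ l, ppd m l (fun y => ppGamma m S y l j k) x)
      - (∑ l, ppd m j (fun y => ppGamma m S y l l k) x)
      + (∑ l, ∑ m', ppGamma m S x l l m' * ppGamma m S x m' j k)
      - (∑ l, ∑ m', ppGamma m S x l j m' * ppGamma m S x m' l k))

/-- `Δ'S`: the Euclidean Laplacian of `S` in the first `m` of `m + 1` variables. -/
def ppLap (m : ℕ) (S : PPPt m → ℝ) (x : PPPt m) : ℝ :=
  ∑ a : Fin m, ppd m a.castSucc (ppd m a.castSucc S) x

/-- `|∇'S|²`: the squared Euclidean gradient of `S` in the first `m` variables. -/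
def ppGradSq (m : ℕ) (S : PPPt m → ℝ) (x : PPPt m) : ℝ :=
  ∑ a : Fin m, (ppd m a.castSucc S x) ^ 2

/-- The conjugate momentum tensor `π` of the pp-wave initial data:
`π^{nn} = 0`, `π^{na} = π^{an} = (1/2)S^{−3/2}S_{,a}`, `π^{ab} = −(1/2)S^{−3/2}S_{,n}δ^{ab}`. -/
def ppPi (m : ℕ) (S : PPPt m → ℝ) (x : PPPt m) (i j : Fin (m + 1)) : ℝ :=
  if i = Fin.last m then
    (if j = Fin.last m then 0 else (1 / 2) * S x ^ (-(3 / 2) : ℝ) * ppd m j S x)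
  else if j = Fin.last m then (1 / 2) * S x ^ (-(3 / 2) : ℝ) * ppd m i S x
  else if i = j then -(1 / 2) * S x ^ (-(3 / 2) : ℝ) * ppd m (Fin.last m) S x
  else 0

/-- `tr_g π = g_{ij}π^{ij}`. -/
def ppTrPi (m : ℕ) (S : PPPt m → ℝ) (x : PPPt m) : ℝ :=
  ∑ i, ∑ j, ppg m S x i j * ppPi m S x i j

/-- `|π|²_g = g_{ik}g_{jl}π^{ij}π^{kl}`. -/
def ppPiNormSq (m : ℕ) (S : PPPt m → ℝ) (x : PPPt m) : ℝ :=
  ∑ i, ∑ j, ∑ k, ∑ l,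
    ppg m S x i k * ppg m S x j l * ppPi m S x i j * ppPi m S x k l

/-- `π_{ij} = g_{ik}g_{jl}π^{kl}`. -/
def ppPiLow (m : ℕ) (S : PPPt m → ℝ) (x : PPPt m) (i j : Fin (m + 1)) : ℝ :=
  ∑ k, ∑ l, ppg m S x i k * ppg m S x j l * ppPi m S x k l

/-- Energy density `μ = (1/2)(R_g + (tr_g π)²/(n−1) − |π|²_g)`, `n − 1 = m`. -/
def ppMu (m : ℕ) (S : PPPt m → ℝ) (x : PPPt m) : ℝ :=
  (1 / 2) * (ppScal m S x + (ppTrPi m S x) ^ 2 / (m : ℝ) - ppPiNormSq m S x)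

/-- Current density `J^j = ∂_i π^{ij} + Γ^i_{li}π^{lj} + Γ^j_{li}π^{li}`. -/
def ppJ (m : ℕ) (S : PPPt m → ℝ) (x : PPPt m) (j : Fin (m + 1)) : ℝ :=
  (∑ i, ppd m i (fun y => ppPi m S y i j) x)
    + (∑ l, ∑ i, ppGamma m S x i l i * ppPi m S x l j)
    + (∑ l, ∑ i, ppGamma m S x j l i * ppPi m S x l i)

/-- `|J|_g = √(g_{ij}J^iJ^j)`. -/
def ppJnorm (m : ℕ) (S : PPPt m → ℝ) (x : PPPt m) : ℝ :=
  Real.sqrt (∑ i, ∑ j, ppg m S x i j * ppJ m S x i * ppJ m S x j)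

/-- The shift vector field `X`: `X^n = S⁻¹`, `X^a = 0`. -/
def ppX (m : ℕ) (S : PPPt m → ℝ) (x : PPPt m) (i : Fin (m + 1)) : ℝ :=
  if i = Fin.last m then (S x)⁻¹ else 0

/-- The lapse function `f = (1/2)S^{−1/2}`. -/
def ppf (m : ℕ) (S : PPPt m → ℝ) (x : PPPt m) : ℝ :=
  (1 / 2) * S x ^ (-(1 / 2) : ℝ)

/-- Lie derivative `(L_X g)_{ij} = X^k ∂_k g_{ij} + g_{kj}∂_i X^k + g_{ik}∂_j X^k`. -/
def ppLXg (m : ℕ) (S : PPPt m → ℝ) (x : PPPt m) (i j : Fin (m + 1)) : ℝ :=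
  (∑ k, ppX m S x k * ppd m k (fun y => ppg m S y i j) x)
    + (∑ k, ppg m S x k j * ppd m i (fun y => ppX m S y k) x)
    + (∑ k, ppg m S x i k * ppd m j (fun y => ppX m S y k) x)

section PPAux
variable {m : ℕ} {S f g : PPPt m → ℝ} {x : PPPt m}

lemma castSucc_ne_last (a : Fin m) : a.castSucc ≠ Fin.last m :=
  Fin.ne_last_of_lt (Fin.castSucc_lt_last a)

lemma ppd_hasFDerivAt {f' : PPPt m →L[ℝ] ℝ} (h : HasFDerivAt f f' x) (i) :
    ppd m i f x = f' (ppe m i) := by unfold ppd; rw [h.fderiv]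

lemma ppd_const (c : ℝ) (i x) : ppd m i (fun _ : PPPt m => c) x = 0 := by
  simp [ppd]

lemma ppd_mul (hf : DifferentiableAt ℝ f x) (hg : DifferentiableAt ℝ g x) (i) :
    ppd m i (fun y => f y * g y) x = ppd m i f x * g x + f x * ppd m i g x := by
  rw [ppd_hasFDerivAt (f := fun y => f y * g y) (hf.hasFDerivAt.mul hg.hasFDerivAt)]
  simp [ppd]
  try ring

lemma ppd_const_mul (hf : DifferentiableAt ℝ f x) (c : ℝ) (i) :
    ppd m i (fun y => c * f y) x = c * ppd m i f x := by
  rw [ppd_hasFDerivAt (hf.hasFDerivAt.const_mul c)]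
  simp [ppd]

lemma ppd_rpow (hf : DifferentiableAt ℝ f x) (hne : f x ≠ 0) (p : ℝ) (i) :
    ppd m i (fun y => f y ^ p) x = p * f x ^ (p - 1) * ppd m i f x := by
  rw [ppd_hasFDerivAt (hf.hasFDerivAt.rpow_const (Or.inl hne))]
  simp [ppd]
  try ring

lemma diff_rpow (hf : DifferentiableAt ℝ f x) (hne : f x ≠ 0) (p : ℝ) :
    DifferentiableAt ℝ (fun y => f y ^ p) x :=
  (hf.hasFDerivAt.rpow_const (Or.inl hne)).differentiableAt

lemma ppd_D (hS : ContDiffAt ℝ (⊤ : ℕ∞) S x) (i j) :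
    ppd m i (ppd m j S) x = fderiv ℝ (fderiv ℝ S) x (ppe m i) (ppe m j) := by
  have h1 : DifferentiableAt ℝ (fderiv ℝ S) x :=
    (hS.fderiv_right (m := 1) (WithTop.coe_le_coe.2 le_top)).differentiableAt one_ne_zero
  have h2 : HasFDerivAt (fun y => fderiv ℝ S y (ppe m j))
      ((ContinuousLinearMap.apply ℝ ℝ (ppe m j)).comp (fderiv ℝ (fderiv ℝ S) x)) x :=
    (ContinuousLinearMap.apply ℝ ℝ (ppe m j)).hasFDerivAt.comp x h1.hasFDerivAt
  rw [show ppd m j S = fun y => fderiv ℝ S y (ppe m j) from rfl,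
    ppd_hasFDerivAt h2]
  rfl

lemma diff_D (hS : ContDiffAt ℝ (⊤ : ℕ∞) S x) (j) :
    DifferentiableAt ℝ (ppd m j S) x := by
  have h1 : DifferentiableAt ℝ (fderiv ℝ S) x :=
    (hS.fderiv_right (m := 1) (WithTop.coe_le_coe.2 le_top)).differentiableAt one_ne_zero
  exact (ContinuousLinearMap.apply ℝ ℝ (ppe m j)).differentiableAt.comp x h1

lemma ppd_symm (hS : ContDiffAt ℝ (⊤ : ℕ∞) S x) (i j) :
    ppd m i (ppd m j S) x = ppd m j (ppd m i S) x := by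
  rw [ppd_D hS, ppd_D hS, (hS.isSymmSndFDerivAt (by rw [minSmoothness_of_isRCLikeNormedField]; exact WithTop.coe_le_coe.2 le_top)).eq]

end PPAux
section PPAux2
variable {m : ℕ} {S : PPPt m → ℝ} {x : PPPt m} {U : Set (PPPt m)}

lemma ppd_congr_nhds {f g : PPPt m → ℝ} (h : f =ᶠ[nhds x] g) (i) :
    ppd m i f x = ppd m i g x := by unfold ppd; rw [h.fderiv_eq]

lemma ppd_ppg (hS1 : DifferentiableAt ℝ S x) (i j k) :
    ppd m k (fun y => ppg m S y i j) x
      = if i = Fin.last m ∧ j = Fin.last m then ppd m k S x else 0 := by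
  by_cases h : i = Fin.last m ∧ j = Fin.last m
  · have hfg : (fun y => ppg m S y i j) = S := by funext y; simp [ppg, h]
    rw [hfg, if_pos h]
  · have hfg : (fun y => ppg m S y i j) = (fun _ => if i = j then (1:ℝ) else 0) := by
      funext y; simp only [ppg, if_neg h]
    rw [hfg, ppd_const, if_neg h]

/-- Closed form of the Christoffel symbols. -/
def GV (m : ℕ) (S : PPPt m → ℝ) (x : PPPt m) (k i j : Fin (m + 1)) : ℝ :=
  if k = Fin.last m then
    (if i = Fin.last m then (1/2) * (S x ^ (-1:ℝ) * ppd m j S x)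
     else if j = Fin.last m then (1/2) * (S x ^ (-1:ℝ) * ppd m i S x) else 0)
  else if i = Fin.last m ∧ j = Fin.last m then -(1/2) * ppd m k S x else 0

lemma ppGamma_eq (hS1 : DifferentiableAt ℝ S x) (hpos : 0 < S x) (k i j) :
    ppGamma m S x k i j = GV m S x k i j := by
  unfold ppGamma
  rw [Finset.sum_eq_single k]
  · rw [ppd_ppg hS1, ppd_ppg hS1, ppd_ppg hS1]
    by_cases hk : k = Fin.last m <;> by_cases hi : i = Fin.last m <;>
      by_cases hj : j = Fin.last m <;>
      simp [GV, ppginv, Real.rpow_neg_one, hk, hi, hj] <;> ring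
  · intro l _ hlk
    have h1 : ¬(k = Fin.last m ∧ l = Fin.last m) := by
      rintro ⟨h1, h2⟩; exact hlk (h2.trans h1.symm)
    simp [ppginv, h1, (Ne.symm hlk : k ≠ l)]
  · intro h; exact absurd (Finset.mem_univ k) h

end PPAux2
section PPAux3
variable {m : ℕ} {S : PPPt m → ℝ} {x : PPPt m} {U : Set (PPPt m)}

lemma ppd_ppGamma_eq (hU : IsOpen U) (hS : ContDiffOn ℝ (⊤ : ℕ∞) S U)
    (hpos : ∀ y ∈ U, 0 < S y) (hx : x ∈ U) (l k i j) :
    ppd m l (fun y => ppGamma m S y k i j) x = ppd m l (fun y => GV m S y k i j) x := by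
  apply ppd_congr_nhds
  filter_upwards [hU.mem_nhds hx] with y hy
  exact ppGamma_eq (((hS y hy).contDiffAt (hU.mem_nhds hy)).differentiableAt (by simp))
    (hpos y hy) k i j

lemma ppd_half_inv_mul (hS : ContDiffAt ℝ (⊤ : ℕ∞) S x) (hne : S x ≠ 0) (l j) :
    ppd m l (fun y => (1/2) * (S y ^ (-1:ℝ) * ppd m j S y)) x
      = (1/2) * (-(S x ^ (-2:ℝ)) * ppd m l S x * ppd m j S x
          + S x ^ (-1:ℝ) * ppd m l (ppd m j S) x) := by
  have h0 : DifferentiableAt ℝ S x := hS.differentiableAt (by simp)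
  have h1 := diff_rpow h0 hne (-1 : ℝ)
  have h2 := diff_D hS j
  rw [ppd_const_mul (f := fun y => S y ^ (-1:ℝ) * ppd m j S y) (h1.mul h2), ppd_mul h1 h2, ppd_rpow h0 hne]
  norm_num

lemma ppd_GV (hS : ContDiffAt ℝ (⊤ : ℕ∞) S x) (hne : S x ≠ 0) (l k i j) :
    ppd m l (fun y => GV m S y k i j) x =
      if k = Fin.last m then
        (if i = Fin.last m then
          (1/2) * (-(S x ^ (-2:ℝ)) * ppd m l S x * ppd m j S x
            + S x ^ (-1:ℝ) * ppd m l (ppd m j S) x)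
         else if j = Fin.last m then
          (1/2) * (-(S x ^ (-2:ℝ)) * ppd m l S x * ppd m i S x
            + S x ^ (-1:ℝ) * ppd m l (ppd m i S) x)
         else 0)
      else if i = Fin.last m ∧ j = Fin.last m then
        -(1/2) * ppd m l (ppd m k S) x
      else 0 := by
  by_cases hk : k = Fin.last m
  · by_cases hi : i = Fin.last m
    · have hfg : (fun y => GV m S y k i j) = fun y => (1/2) * (S y ^ (-1:ℝ) * ppd m j S y) := by
        funext y; simp [GV, hk, hi]
      rw [hfg, ppd_half_inv_mul hS hne, if_pos hk, if_pos hi]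
    · by_cases hj : j = Fin.last m
      · have hfg : (fun y => GV m S y k i j) = fun y => (1/2) * (S y ^ (-1:ℝ) * ppd m i S y) := by
          funext y; simp [GV, hk, hi, hj]
        rw [hfg, ppd_half_inv_mul hS hne, if_pos hk, if_neg hi, if_pos hj]
      · have hfg : (fun y => GV m S y k i j) = fun _ => (0:ℝ) := by
          funext y; simp [GV, hk, hi, hj]
        rw [hfg, ppd_const, if_pos hk, if_neg hi, if_neg hj]
  · by_cases hij : i = Fin.last m ∧ j = Fin.last m
    · have hfg : (fun y => GV m S y k i j) = fun y => -(1/2) * ppd m k S y := by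
        funext y; simp [GV, hk, hij]
      rw [hfg, ppd_const_mul (diff_D hS k), if_neg hk, if_pos hij]
    · have hfg : (fun y => GV m S y k i j) = fun _ => (0:ℝ) := by
        funext y; simp [GV, hk, hij]
      rw [hfg, ppd_const, if_neg hk, if_neg hij]

lemma ppd_P (hS : ContDiffAt ℝ (⊤ : ℕ∞) S x) (hne : S x ≠ 0) (c : ℝ) (l j) :
    ppd m l (fun y => c * S y ^ (-(3/2):ℝ) * ppd m j S y) x
      = c * (-(3/2)) * S x ^ (-(5/2):ℝ) * ppd m l S x * ppd m j S x
        + c * S x ^ (-(3/2):ℝ) * ppd m l (ppd m j S) x := by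
  have h0 : DifferentiableAt ℝ S x := hS.differentiableAt (by simp)
  have h1 := (diff_rpow h0 hne (-(3/2) : ℝ)).const_mul c
  have h2 := diff_D hS j
  rw [ppd_mul h1 h2, ppd_const_mul (diff_rpow h0 hne (-(3/2):ℝ)) c,
    ppd_rpow h0 hne]
  have : (-(3/2) : ℝ) - 1 = -(5/2) := by norm_num
  rw [this]
  ring

lemma ppd_ppPi (hS : ContDiffAt ℝ (⊤ : ℕ∞) S x) (hne : S x ≠ 0) (l i j) :
    ppd m l (fun y => ppPi m S y i j) x =
      if i = Fin.last m then
        (if j = Fin.last m then 0 else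
          (1/2) * (-(3/2)) * S x ^ (-(5/2):ℝ) * ppd m l S x * ppd m j S x
            + (1/2) * S x ^ (-(3/2):ℝ) * ppd m l (ppd m j S) x)
      else if j = Fin.last m then
        (1/2) * (-(3/2)) * S x ^ (-(5/2):ℝ) * ppd m l S x * ppd m i S x
          + (1/2) * S x ^ (-(3/2):ℝ) * ppd m l (ppd m i S) x
      else if i = j then
        -(1/2) * (-(3/2)) * S x ^ (-(5/2):ℝ) * ppd m l S x * ppd m (Fin.last m) S x
          + -(1/2) * S x ^ (-(3/2):ℝ) * ppd m l (ppd m (Fin.last m) S) x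
      else 0 := by
  by_cases hi : i = Fin.last m
  · by_cases hj : j = Fin.last m
    · have hfg : (fun y => ppPi m S y i j) = fun _ => (0:ℝ) := by
        funext y; simp [ppPi, hi, hj]
      rw [hfg, ppd_const, if_pos hi, if_pos hj]
    · have hfg : (fun y => ppPi m S y i j)
          = fun y => (1/2) * S y ^ (-(3/2):ℝ) * ppd m j S y := by
        funext y; simp [ppPi, hi, hj]
      rw [hfg, ppd_P hS hne, if_pos hi, if_neg hj]
  · by_cases hj : j = Fin.last m
    · have hfg : (fun y => ppPi m S y i j)
          = fun y => (1/2) * S y ^ (-(3/2):ℝ) * ppd m i S y := by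
        funext y; simp [ppPi, hi, hj]
      rw [hfg, ppd_P hS hne, if_neg hi, if_pos hj]
    · by_cases hij : i = j
      · have hfg : (fun y => ppPi m S y i j)
            = fun y => -(1/2) * S y ^ (-(3/2):ℝ) * ppd m (Fin.last m) S y := by
          funext y; simp [ppPi, hi, hj, hij]
        rw [hfg, ppd_P hS hne, if_neg hi, if_neg hj, if_pos hij]
      · have hfg : (fun y => ppPi m S y i j) = fun _ => (0:ℝ) := by
          funext y; simp [ppPi, hi, hj, hij]
        rw [hfg, ppd_const, if_neg hi, if_neg hj, if_neg hij]

end PPAux3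
section PPAux4
variable {m : ℕ} {S : PPPt m → ℝ} {x : PPPt m}

lemma last_ne_castSucc (a : Fin m) : Fin.last m ≠ a.castSucc :=
  (castSucc_ne_last a).symm

lemma ppTrPi_eq :
    ppTrPi m S x = -((m:ℝ)/2) * S x ^ (-(3/2):ℝ) * ppd m (Fin.last m) S x := by
  unfold ppTrPi
  simp [Fin.sum_univ_castSucc, ppg, ppPi, castSucc_ne_last, last_ne_castSucc,
    Fin.castSucc_inj, mul_ite, ite_mul, Finset.sum_ite_eq, Finset.sum_ite_eq']
  ring

lemma ppPiNormSq_eq :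
    ppPiNormSq m S x = (m:ℝ)/4 * (S x ^ (-(3/2):ℝ))^2 * (ppd m (Fin.last m) S x)^2
      + (1/2) * S x * (S x ^ (-(3/2):ℝ))^2 * ppGradSq m S x := by
  unfold ppPiNormSq ppGradSq
  simp [Fin.sum_univ_castSucc, ppg, ppPi, castSucc_ne_last, last_ne_castSucc,
    Fin.castSucc_inj, mul_ite, ite_mul, Finset.sum_ite_eq, Finset.sum_ite_eq',
    Finset.mul_sum, Finset.sum_add_distrib]
  have h2 : (∑ a : Fin m, S x * (2⁻¹ * S x ^ (-(3/2):ℝ) * ppd m a.castSucc S x)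
        * (2⁻¹ * S x ^ (-(3/2):ℝ) * ppd m a.castSucc S x))
      = (1/4) * S x * (S x ^ (-(3/2):ℝ))^2 * ∑ a : Fin m, ppd m a.castSucc S x ^ 2 := by
    rw [Finset.mul_sum]
    exact Finset.sum_congr rfl fun a _ => by ring
  have h3 : (∑ a : Fin m, 2⁻¹ * S x * (S x ^ (-(3/2):ℝ))^2 * ppd m a.castSucc S x ^ 2)
      = 2⁻¹ * S x * (S x ^ (-(3/2):ℝ))^2 * ∑ a : Fin m, ppd m a.castSucc S x ^ 2 := by
    rw [Finset.mul_sum]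
  rw [h2, h3]
  ring

end PPAux4
section PPAux5
variable {m : ℕ} {S : PPPt m → ℝ} {x : PPPt m}

lemma ppJ_cast (hS : ContDiffAt ℝ (⊤ : ℕ∞) S x) (hpos : 0 < S x) (b : Fin m) :
    ppJ m S x b.castSucc = 0 := by
  have hne := hpos.ne'
  unfold ppJ
  simp only [ppd_ppPi hS hne, ppGamma_eq (hS.differentiableAt (by simp)) hpos]
  simp [GV, ppPi, Fin.sum_univ_castSucc, castSucc_ne_last, last_ne_castSucc,
    Fin.castSucc_inj, mul_ite, ite_mul, Finset.sum_ite_eq, Finset.sum_ite_eq']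
  rw [ppd_symm hS]
  ring

lemma ppJ_last (hS : ContDiffAt ℝ (⊤ : ℕ∞) S x) (hpos : 0 < S x) :
    ppJ m S x (Fin.last m) = (1/2) * S x ^ (-(3/2):ℝ) * ppLap m S x := by
  have hne := hpos.ne'
  unfold ppJ ppLap
  simp only [ppd_ppPi hS hne, ppGamma_eq (hS.differentiableAt (by simp)) hpos]
  simp [GV, ppPi, Fin.sum_univ_castSucc, castSucc_ne_last, last_ne_castSucc,
    Fin.castSucc_inj, mul_ite, ite_mul, Finset.sum_ite_eq, Finset.sum_ite_eq']
  have hmul : S x ^ (-1:ℝ) * S x ^ (-(3/2):ℝ) = S x ^ (-(5/2):ℝ) := by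
    rw [← Real.rpow_add hpos]; norm_num
  rw [← Finset.sum_add_distrib, ← Finset.sum_add_distrib, ← Finset.sum_add_distrib,
    Finset.mul_sum]
  refine Finset.sum_congr rfl fun a _ => ?_
  linear_combination (3/4 : ℝ) * (ppd m a.castSucc S x)^2 * hmul

end PPAux5
section PPAux6
variable {m : ℕ} {S : PPPt m → ℝ} {x : PPPt m} {U : Set (PPPt m)}

lemma ppScal_eq (hU : IsOpen U) (hS : ContDiffOn ℝ (⊤ : ℕ∞) S U)
    (hpos : ∀ y ∈ U, 0 < S y) (hx : x ∈ U) :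
    ppScal m S x = -(S x ^ (-1:ℝ)) * ppLap m S x
      + (1/2) * S x ^ (-2:ℝ) * ppGradSq m S x := by
  have hA : ContDiffAt ℝ (⊤ : ℕ∞) S x := (hS x hx).contDiffAt (hU.mem_nhds hx)
  have hp := hpos x hx
  have hne := hp.ne'
  unfold ppScal ppLap ppGradSq
  simp only [ppd_ppGamma_eq hU hS hpos hx, ppd_GV hA hne,
    ppGamma_eq (hA.differentiableAt (by simp)) hp]
  simp [GV, ppginv, Fin.sum_univ_castSucc, castSucc_ne_last, last_ne_castSucc,
    Fin.castSucc_inj, mul_ite, ite_mul, Finset.sum_ite_eq, Finset.sum_ite_eq']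
  rw [show ((S x)⁻¹ : ℝ) = S x ^ (-1:ℝ) from (Real.rpow_neg_one _).symm]
  simp only [mul_add, mul_neg, neg_neg, sub_eq_add_neg, Finset.mul_sum,
    ← Finset.sum_neg_distrib, ← Finset.sum_add_distrib]
  exact Finset.sum_congr rfl fun a _ => by ring

end PPAux6
section PPAux7
variable {m : ℕ} {S : PPPt m → ℝ} {x : PPPt m} {U : Set (PPPt m)}

lemma ppMu_eq (hm : 1 ≤ m) (hU : IsOpen U) (hS : ContDiffOn ℝ (⊤ : ℕ∞) S U)
    (hpos : ∀ y ∈ U, 0 < S y) (hx : x ∈ U) :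
    ppMu m S x = -(1/2) * (S x)⁻¹ * ppLap m S x := by
  have hp := hpos x hx
  have hne := hp.ne'
  have hm0 : (m:ℝ) ≠ 0 := Nat.cast_ne_zero.2 (by omega)
  unfold ppMu
  rw [ppScal_eq hU hS hpos hx, ppTrPi_eq, ppPiNormSq_eq]
  have hP2 : (S x ^ (-(3/2):ℝ))^2 = S x ^ (-3:ℝ) := by
    rw [← Real.rpow_natCast (S x ^ (-(3/2):ℝ)) 2, ← Real.rpow_mul hp.le]
    norm_num
  have hS3 : S x * S x ^ (-3:ℝ) = S x ^ (-2:ℝ) := by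
    nth_rewrite 1 [← Real.rpow_one (S x)]
    rw [← Real.rpow_add hp]
    norm_num
  have hS1 : S x ^ (-1:ℝ) = (S x)⁻¹ := Real.rpow_neg_one _
  have hdiv : (-((m:ℝ)/2) * S x ^ (-(3/2):ℝ) * ppd m (Fin.last m) S x)^2 / (m:ℝ)
      = (m:ℝ)/4 * (S x ^ (-(3/2):ℝ))^2 * (ppd m (Fin.last m) S x)^2 := by
    field_simp
    ring
  rw [hdiv]
  linear_combination (-(1/4 : ℝ) * ppGradSq m S x) * hS3
    - (1/4:ℝ) * ppGradSq m S x * S x * hP2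
    - (1/2:ℝ) * ppLap m S x * hS1

end PPAux7
section PPAux8
variable {m : ℕ} {S : PPPt m → ℝ} {x : PPPt m} {U : Set (PPPt m)}

lemma ppJnorm_eq (hA : ContDiffAt ℝ (⊤ : ℕ∞) S x) (hp : 0 < S x) (hL : ppLap m S x ≤ 0) :
    ppJnorm m S x = -(1/2) * (S x)⁻¹ * ppLap m S x := by
  have hne := hp.ne'
  have hP2 : (S x ^ (-(3/2):ℝ))^2 = S x ^ (-3:ℝ) := by
    rw [← Real.rpow_natCast (S x ^ (-(3/2):ℝ)) 2, ← Real.rpow_mul hp.le]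
    norm_num
  have hS3 : S x * S x ^ (-3:ℝ) = S x ^ (-2:ℝ) := by
    nth_rewrite 1 [← Real.rpow_one (S x)]
    rw [← Real.rpow_add hp]
    norm_num
  have hI2 : S x ^ (-2:ℝ) = (S x)⁻¹ ^ 2 := by
    rw [show (-2:ℝ) = ((-2:ℤ):ℝ) by norm_num, Real.rpow_intCast, zpow_neg, inv_pow]
    norm_cast
  unfold ppJnorm
  have hsum : (∑ i, ∑ j, ppg m S x i j * ppJ m S x i * ppJ m S x j)
      = (-(1/2) * (S x)⁻¹ * ppLap m S x)^2 := by
    simp [Fin.sum_univ_castSucc, ppJ_cast hA hp, ppJ_last hA hp, ppg,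
      castSucc_ne_last, last_ne_castSucc, Fin.castSucc_inj, mul_ite, ite_mul,
      Finset.sum_ite_eq, Finset.sum_ite_eq']
    linear_combination ((1/4 : ℝ) * (ppLap m S x)^2) * hS3
      + (1/4:ℝ) * (ppLap m S x)^2 * S x * hP2
      + (1/4:ℝ) * (ppLap m S x)^2 * hI2
  rw [hsum]
  exact Real.sqrt_sq (by
    have h1 : 0 ≤ (S x)⁻¹ := le_of_lt (inv_pos.2 hp)
    nlinarith)

end PPAux8
/-- for the pp-wave initial data `(U, g, π)`, the energy and current
densities satisfy `μ = −(1/2)S⁻¹Δ'S`, `J^a = 0` for `a = 1, …, n−1`, and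
`J^n = (1/2)S^{−3/2}Δ'S` on `U`; consequently if `Δ'S ≤ 0` on `U` then
`μ = |J|_g ≥ 0` on `U`. -/
theorem ppWave_energy_current_densities (m : ℕ) (hm : 1 ≤ m)
    (U : Set (PPPt m)) (hU : IsOpen U)
    (S : PPPt m → ℝ) (hS : ContDiffOn ℝ (⊤ : ℕ∞) S U) (hpos : ∀ x ∈ U, 0 < S x) :
    (∀ x ∈ U,
        ppMu m S x = -(1 / 2) * (S x)⁻¹ * ppLap m S x ∧
        (∀ a : Fin m, ppJ m S x a.castSucc = 0) ∧
        ppJ m S x (Fin.last m) = (1 / 2) * S x ^ (-(3 / 2) : ℝ) * ppLap m S x) ∧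
      ((∀ x ∈ U, ppLap m S x ≤ 0) →
        ∀ x ∈ U, ppMu m S x = ppJnorm m S x ∧ 0 ≤ ppMu m S x) := by
  constructor
  · intro x hx
    have hA : ContDiffAt ℝ (⊤ : ℕ∞) S x := (hS x hx).contDiffAt (hU.mem_nhds hx)
    have hp := hpos x hx
    exact ⟨ppMu_eq hm hU hS hpos hx, ppJ_cast hA hp, ppJ_last hA hp⟩
  · intro hL x hx
    have hA : ContDiffAt ℝ (⊤ : ℕ∞) S x := (hS x hx).contDiffAt (hU.mem_nhds hx)
    have hp := hpos x hx
    have hmu := ppMu_eq hm hU hS hpos hx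
    have hnorm := ppJnorm_eq hA hp (hL x hx)
    refine ⟨by rw [hmu, hnorm], ?_⟩
    rw [hmu]
    have h1 : 0 ≤ (S x)⁻¹ := le_of_lt (inv_pos.2 hp)
    nlinarith [hL x hx]

end
end
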